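/- Let Γ be a finite group and M a Γ-lattice. Suppose 0 → P → F →^α M → 0 is a short exact sequence of Γ-lattices with F flasque and P permutation (a flasque resolution of the second type), and suppose 0 → Q → N →^γ M → 0 is a short exact sequence of Γ-lattices with Q invertible. Then there exists a ℤ[Γ]-module homomorphism φ : F → N such that γ ∘ φ = α. -/

import Mathlib

/-! Basic definitions for Γ-lattices over a finite group Γ. -/

/-- A `Γ`-lattice: a finitely generated free `ℤ`-module equipped with a
`ℤ`-linear action of `Γ`, i.e. a `ℤ[Γ]`-module which is finitely generated
and free as a `ℤ`-module. -/
structure GammaLattice (Γ : Type) [Group Γ] where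
  carrier : Type
  [isAddCommGroup : AddCommGroup carrier]
  [isModule : Module ℤ carrier]
  ρ : Representation ℤ Γ carrier
  free : Module.Free ℤ carrier
  finite : Module.Finite ℤ carrier

attribute [instance] GammaLattice.isAddCommGroup GammaLattice.isModule

variable {Γ : Type} [Group Γ]

/-- A `ℤ`-linear map between `Γ`-representations is equivariant (i.e. is a
`ℤ[Γ]`-module homomorphism) if it commutes with the `Γ`-actions. -/
def IsEquivariantMap {M N : Type} [AddCommGroup M] [Module ℤ M]
    [AddCommGroup N] [Module ℤ N]
    (ρM : Representation ℤ Γ M) (ρN : Representation ℤ Γ N)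
    (f : M →ₗ[ℤ] N) : Prop :=
  ∀ (γ : Γ) (m : M), f (ρM γ m) = ρN γ (f m)

/-- A short exact sequence `0 → A → B → C → 0` of `ℤ[Γ]`-modules. -/
def IsShortExactSeq {A B C : Type} [AddCommGroup A] [Module ℤ A]
    [AddCommGroup B] [Module ℤ B] [AddCommGroup C] [Module ℤ C]
    (ρA : Representation ℤ Γ A) (ρB : Representation ℤ Γ B)
    (ρC : Representation ℤ Γ C)
    (f : A →ₗ[ℤ] B) (g : B →ₗ[ℤ] C) : Prop :=
  IsEquivariantMap ρA ρB f ∧ IsEquivariantMap ρB ρC g ∧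
    Function.Injective f ∧ Function.Surjective g ∧
    LinearMap.range f = LinearMap.ker g

/-- A `Γ`-lattice is a permutation lattice if it has a `ℤ`-basis permuted
by `Γ`. -/
def GammaLattice.IsPermutation (L : GammaLattice Γ) : Prop :=
  ∃ (ι : Type) (b : Module.Basis ι ℤ L.carrier),
    ∀ (γ : Γ) (i : ι), ∃ j : ι, L.ρ γ (b i) = b j

/-- A `Γ`-lattice is invertible if it is a direct summand of a permutation
`Γ`-lattice. -/
def GammaLattice.IsInvertible (L : GammaLattice Γ) : Prop :=
  ∃ N : GammaLattice Γ, N.IsPermutation ∧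
    ∃ (i : L.carrier →ₗ[ℤ] N.carrier) (p : N.carrier →ₗ[ℤ] L.carrier),
      IsEquivariantMap L.ρ N.ρ i ∧ IsEquivariantMap N.ρ L.ρ p ∧
        p.comp i = LinearMap.id

/-- A `Γ`-lattice is coflasque if `H¹(Γ', M) = 0` for every subgroup
`Γ' ≤ Γ`. -/
def GammaLattice.IsCoflasque (L : GammaLattice Γ) : Prop :=
  ∀ Γ' : Subgroup Γ,
    Subsingleton (groupCohomology.H1 (Rep.of (L.ρ.comp Γ'.subtype)))

/-- The dual lattice `M^∨ = Hom_ℤ(M, ℤ)` with the action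
`(γ · f)(m) = f(γ⁻¹ · m)`. -/
noncomputable def GammaLattice.dual (L : GammaLattice Γ) : GammaLattice Γ where
  carrier := Module.Dual ℤ L.carrier
  ρ := L.ρ.dual
  free := by have := L.free; have := L.finite; infer_instance
  finite := by have := L.free; have := L.finite; infer_instance

/-- A `Γ`-lattice is flasque if its dual is coflasque. -/
noncomputable def GammaLattice.IsFlasque (L : GammaLattice Γ) : Prop :=
  L.dual.IsCoflasque

/-- `Ext¹_Γ(A, B) = 0`, formulated as: every short exact sequence of
`ℤ[Γ]`-modules `0 → B → E → A → 0` splits (admits an equivariant section). -/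
def Ext1Vanishes {A B : Type} [AddCommGroup A] [Module ℤ A]
    [AddCommGroup B] [Module ℤ B]
    (ρA : Representation ℤ Γ A) (ρB : Representation ℤ Γ B) : Prop :=
  ∀ (E : Type) [AddCommGroup E] [Module ℤ E],
    ∀ (ρE : Representation ℤ Γ E) (ι : B →ₗ[ℤ] E) (π : E →ₗ[ℤ] A),
      IsShortExactSeq ρB ρE ρA ι π →
      ∃ s : A →ₗ[ℤ] E, IsEquivariantMap ρA ρE s ∧ π.comp s = LinearMap.id

/-- The direct sum (product) of two representations. -/
def prodRep {M N : Type} [AddCommGroup M] [Module ℤ M]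
    [AddCommGroup N] [Module ℤ N]
    (ρM : Representation ℤ Γ M) (ρN : Representation ℤ Γ N) :
    Representation ℤ Γ (M × N) where
  toFun γ := (ρM γ).prodMap (ρN γ)
  map_one' := by ext x <;> simp
  map_mul' g h := by ext x <;> simp [Module.End.mul_apply]

/-!
The defect `g • φ₀ - φ₀` of a `ℤ`-linear lift `φ₀` of `α` through `γ` is a 1-cocycle of `Γ`
with values in `Hom(F, Q)`, and `φ₀` can be corrected to an equivariant lift exactly when it
is a coboundary. Since `Q` is a direct summand of a permutation lattice `L = ⊕ ℤ[Γ/Γᵢ]`, it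
suffices that `H¹(Γ, Hom(F, L)) = 0`. By Shapiro's lemma
`H¹(Γ, Hom(F, ℤ[Γ/Γᵢ])) = H¹(Γᵢ, F^∨)`, which vanishes because `F` is flasque.
-/

universe u

theorem MulAction.exists_orbit_transversal (G ι : Type*) [Group G] [MulAction G ι] :
    ∃ (r : ι → ι) (s : ι → G), (∀ (g : G) i, r (g • i) = r i) ∧ ∀ i, s i • r i = i := by
  have hs : ∀ i, ∃ s : G, s • (Quotient.mk (orbitRel G ι) i).out = i := fun i => by
    obtain ⟨s, hs⟩ := Quotient.mk_out (s := orbitRel G ι) i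
    exact ⟨s⁻¹, inv_smul_eq_iff.2 hs.symm⟩
  choose s hs using hs
  exact ⟨_, s, fun g i => congrArg Quotient.out (Quotient.sound (mem_orbit i g)), hs⟩

namespace Representation

variable {k G : Type u} [CommRing k] [Group G]
variable {A B V : Type u} [AddCommGroup A] [Module k A] [AddCommGroup B] [Module k B]
  [AddCommGroup V] [Module k V]

/-- `H¹(G, A) = 0`, phrased through cocycles. The module structure is an implicit argument
rather than an instance argument: over `ℤ`, instance search would find the non-defeq
`AddCommGroup.toIntModule` on `V →ₗ[ℤ] W` instead of the structure that `linHom` uses. -/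
def CocyclesAreCoboundaries {_ : Module k A} (ρ : Representation k G A) : Prop :=
  ∀ c : G → A, (∀ g h, c (g * h) = ρ g (c h) + c g) → ∃ x, ∀ g, ρ g x - x = c g

theorem cocyclesAreCoboundaries_of_subsingleton_H1 (ρ : Representation k G A)
    (h : Subsingleton (groupCohomology.H1 (Rep.of ρ))) : ρ.CocyclesAreCoboundaries := by
  intro c hc
  obtain ⟨x, hx⟩ := (groupCohomology.H1π_eq_zero_iff (A := Rep.of ρ)
    ⟨c, (groupCohomology.mem_cocycles₁_iff (A := Rep.of ρ) c).2 hc⟩).1 (Subsingleton.elim _ _)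
  exact ⟨x, congrFun hx⟩

theorem CocyclesAreCoboundaries.of_retract {ρ : Representation k G A}
    {τ : Representation k G B} (i : IntertwiningMap ρ τ) (p : IntertwiningMap τ ρ)
    (hpi : ∀ a, p (i a) = a) (hτ : τ.CocyclesAreCoboundaries) :
    ρ.CocyclesAreCoboundaries := by
  intro c hc
  obtain ⟨x, hx⟩ := hτ (i ∘ c) fun g h => by simp [hc, IntertwiningMap.isIntertwining]
  exact ⟨p x, fun g => by
    rw [← IntertwiningMap.isIntertwining, ← map_sub, hx, Function.comp_apply, hpi]⟩

theorem CocyclesAreCoboundaries.of_equiv {ρ : Representation k G A}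
    {τ : Representation k G B} (e : ρ.Equiv τ) (hτ : τ.CocyclesAreCoboundaries) :
    ρ.CocyclesAreCoboundaries :=
  hτ.of_retract e.toIntertwiningMap e.symm.toIntertwiningMap e.symm_apply_apply

def IntertwiningMap.linHomPostcomp {ρ : Representation k G A} {τ : Representation k G B}
    (ρV : Representation k G V) (f : IntertwiningMap ρ τ) :
    IntertwiningMap (ρV.linHom ρ) (ρV.linHom τ) where
  toLinearMap := LinearMap.llcomp k V A B f.toLinearMap
  isIntertwining' g := by
    ext φ v
    simp [linHom_apply, IntertwiningMap.isIntertwining]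

theorem CocyclesAreCoboundaries.linHom_of_retract {ρ : Representation k G A}
    {τ : Representation k G B} (ρV : Representation k G V) (i : IntertwiningMap ρ τ)
    (p : IntertwiningMap τ ρ) (hpi : ∀ a, p (i a) = a)
    (hτ : (ρV.linHom τ).CocyclesAreCoboundaries) : (ρV.linHom ρ).CocyclesAreCoboundaries :=
  hτ.of_retract (i.linHomPostcomp ρV) (p.linHomPostcomp ρV) fun φ =>
    LinearMap.ext fun v => hpi (φ v)

theorem linHom_apply_eq_self_iff {ρ : Representation k G A} {τ : Representation k G B}
    (f : A →ₗ[k] B) (g : G) : ρ.linHom τ g f = f ↔ ∀ a, f (ρ g a) = τ g (f a) := by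
  refine ⟨fun hf a => ?_, fun hf => LinearMap.ext fun a => ?_⟩
  · rw [← LinearMap.congr_fun hf (ρ g a)]
    simp [linHom_apply, ← Module.End.mul_apply, ← map_mul]
  · simp [linHom_apply, ← hf, ← Module.End.mul_apply, ← map_mul]

/-- For `ι = G ⧸ H` this is the module coinduced from the restriction of `ρ` to `H`. -/
def piOfMulAction (ρ : Representation k G A) (ι : Type*) [MulAction G ι] :
    Representation k G (ι → A) where
  toFun g := LinearMap.pi fun i => ρ g ∘ₗ LinearMap.proj (g⁻¹ • i)
  map_one' := by ext; simp
  map_mul' g h := by ext; simp [mul_smul, Module.End.mul_apply]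

@[simp]
theorem piOfMulAction_apply (ρ : Representation k G A) {ι : Type*} [MulAction G ι] (g : G)
    (x : ι → A) (i : ι) : ρ.piOfMulAction ι g x i = ρ g (x (g⁻¹ • i)) := rfl

theorem cocyclesAreCoboundaries_piOfMulAction (ρ : Representation k G A) (ι : Type u)
    [MulAction G ι]
    (hρ : ∀ i : ι, CocyclesAreCoboundaries (ρ.comp (MulAction.stabilizer G i).subtype)) :
    (ρ.piOfMulAction ι).CocyclesAreCoboundaries := by
  intro c hc
  have hc_apply : ∀ g h i, c (g * h) i = ρ g (c h (g⁻¹ • i)) + c g i :=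
    fun g h i => congrFun (hc g h) i
  have hstab : ∀ i, ∃ e : A, ∀ h ∈ MulAction.stabilizer G i, ρ h e - e = c h i := by
    intro i
    obtain ⟨e, he⟩ := hρ i (fun h => c h i) fun g h => by
      simp [hc_apply, MulAction.mem_stabilizer_iff.1 (inv_mem g.2)]
    exact ⟨e, fun h hh => he ⟨h, hh⟩⟩
  choose e he using hstab
  obtain ⟨r, s, hr, hs⟩ := MulAction.exists_orbit_transversal G ι
  -- glue the potentials at the base points `r i` of the orbits along the transporters `s i`
  refine ⟨fun i => ρ (s i) (e (r i)) - c (s i) i, fun g => funext fun i => ?_⟩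
  set i' := g⁻¹ • i
  have hri' : r i' = r i := hr _ _
  have hsh : s i * ((s i)⁻¹ * g * s i') = g * s i' := by group
  set h := (s i)⁻¹ * g * s i'
  have hh : h ∈ MulAction.stabilizer G (r i) := by
    rw [MulAction.mem_stabilizer_iff, mul_smul, mul_smul, ← hri', hs, smul_inv_smul,
      inv_smul_eq_iff, hri', hs]
  have hc_g : c g i = c (s i * h) i - ρ g (c (s i') i') := by
    rw [hsh, hc_apply]
    abel
  have hc_sh : c (s i * h) i = ρ (s i) (ρ h (e (r i)) - e (r i)) + c (s i) i := by
    rw [hc_apply, he _ h hh, ← inv_smul_eq_iff.2 (hs i).symm]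
  have hρ_gs : ρ g (ρ (s i') (e (r i))) = ρ (s i) (ρ h (e (r i))) := by
    rw [← Module.End.mul_apply, ← map_mul, ← hsh, map_mul, Module.End.mul_apply]
  show ρ g (ρ (s i') (e (r i')) - c (s i') i') - (ρ (s i) (e (r i)) - c (s i) i) = c g i
  rw [hri', map_sub, hρ_gs, hc_g, hc_sh, map_sub]
  abel

noncomputable def linearEquivPiDual {ι L : Type u} [Finite ι] [AddCommGroup L] [Module k L]
    (b : Module.Basis ι k L) :
    (V →ₗ[k] L) ≃ₗ[k] (ι → Module.Dual k V) where
  toFun φ i := b.coord i ∘ₗ φ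
  invFun x := b.equivFun.symm.toLinearMap ∘ₗ LinearMap.pi x
  map_add' φ ψ := by ext; simp
  map_smul' c φ := by ext; simp
  left_inv φ := by ext v; exact b.equivFun.symm_apply_eq.2 (by ext; simp)
  right_inv x := by ext; simp [← b.equivFun_apply]

section PermutesBasis

variable {ι L : Type u} [MulAction G ι] [AddCommGroup L] [Module k L]
  {ρL : Representation k G L} {b : Module.Basis ι k L}

theorem repr_apply_of_permutes_basis (hb : ∀ g i, ρL g (b i) = b (g • i)) (g : G) (x : L)
    (i : ι) : b.repr (ρL g x) i = b.repr x (g⁻¹ • i) := by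
  classical
  suffices b.coord i ∘ₗ ρL g = b.coord (g⁻¹ • i) from LinearMap.congr_fun this x
  refine b.ext fun j => ?_
  simp [hb, Finsupp.single_apply, smul_eq_iff_eq_inv_smul]

variable [Finite ι]

noncomputable def linHomEquivPiDual (ρV : Representation k G V)
    (hb : ∀ g i, ρL g (b i) = b (g • i)) :
    (ρV.linHom ρL).Equiv (ρV.dual.piOfMulAction ι) :=
  .mk (linearEquivPiDual b) fun g => by
    ext φ i v
    simp [linearEquivPiDual, linHom_apply, dual_apply, Module.Dual.transpose_apply,
      repr_apply_of_permutes_basis hb]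

theorem cocyclesAreCoboundaries_linHom_of_permutes_basis (ρV : Representation k G V)
    (hV : ∀ H : Subgroup G, CocyclesAreCoboundaries (ρV.dual.comp H.subtype))
    (hb : ∀ g i, ρL g (b i) = b (g • i)) : (ρV.linHom ρL).CocyclesAreCoboundaries :=
  (cocyclesAreCoboundaries_piOfMulAction _ ι fun _ => hV _).of_equiv
    (linHomEquivPiDual ρV hb)

end PermutesBasis

theorem exists_intertwiningMap_lift {F Q N M : Type u} [AddCommGroup F] [Module k F]
    [Module.Projective k F] [AddCommGroup Q] [Module k Q] [AddCommGroup N] [Module k N]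
    [AddCommGroup M] [Module k M] {ρF : Representation k G F} {ρQ : Representation k G Q}
    {ρN : Representation k G N} {ρM : Representation k G M}
    (hFQ : (ρF.linHom ρQ).CocyclesAreCoboundaries) (j : IntertwiningMap ρQ ρN)
    (γ : IntertwiningMap ρN ρM) (hj : Function.Injective j) (hγ : Function.Surjective γ)
    (hexact : Function.Exact j γ) (α : IntertwiningMap ρF ρM) :
    ∃ φ : IntertwiningMap ρF ρN, ∀ f, γ (φ f) = α f := by
  obtain ⟨φ₀, hφ₀⟩ := Module.projective_lifting_property γ.toLinearMap α.toLinearMap hγ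
  have hlift : ∀ f, γ (φ₀ f) = α f := LinearMap.congr_fun hφ₀
  have hdefect : ∀ g, ∃ c : F →ₗ[k] Q, j.toLinearMap ∘ₗ c = ρF.linHom ρN g φ₀ - φ₀ := by
    intro g
    have hmem : ∀ f, (ρF.linHom ρN g φ₀ - φ₀) f ∈ LinearMap.range j.toLinearMap := fun f => by
      refine (hexact _).1 ?_
      simp [linHom_apply, IntertwiningMap.isIntertwining, hlift, self_inv_apply]
    obtain ⟨c, hc⟩ := Module.projective_lifting_property j.toLinearMap.rangeRestrict
      ((ρF.linHom ρN g φ₀ - φ₀).codRestrict _ hmem) j.toLinearMap.surjective_rangeRestrict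
    exact ⟨c, LinearMap.ext fun f => congrArg Subtype.val (LinearMap.congr_fun hc f)⟩
  choose c hc using hdefect
  let jpost := j.linHomPostcomp ρF
  have hjpost : ∀ ψ, jpost ψ = j.toLinearMap ∘ₗ ψ := fun _ => rfl
  have hjpost_inj : Function.Injective jpost := fun ψ ψ' h =>
    LinearMap.ext fun f => hj (LinearMap.congr_fun h f)
  have hcocycle : ∀ g h, c (g * h) = ρF.linHom ρQ g (c h) + c g := fun g h => hjpost_inj <| by
    rw [map_add, IntertwiningMap.isIntertwining, hjpost, hjpost, hjpost, hc, hc, hc, map_sub,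
      map_mul, Module.End.mul_apply]
    abel
  obtain ⟨w, hw⟩ := hFQ c hcocycle
  have hfixed : ∀ g, ρF.linHom ρN g (φ₀ - jpost w) = φ₀ - jpost w := fun g => by
    rw [map_sub, ← jpost.isIntertwining, ← sub_add_cancel (ρF.linHom ρQ g w) w, hw, map_add,
      hjpost (c g), hc]
    abel
  refine ⟨(φ₀ - jpost w).intertwiningMap_of_isIntertwiningMap ρF ρN
    fun g => (linHom_apply_eq_self_iff _ g).1 (hfixed g), fun f => ?_⟩
  have hγj : ∀ q, γ (j q) = 0 := fun q => (hexact _).2 ⟨q, rfl⟩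
  simp [hlift, hjpost, hγj]

end Representation

section Lattices

open Representation

theorem GammaLattice.IsPermutation.exists_mulAction {L : GammaLattice Γ} (hL : L.IsPermutation) :
    ∃ (ι : Type) (_ : MulAction Γ ι) (b : Module.Basis ι ℤ L.carrier),
      ∀ g i, L.ρ g (b i) = b (g • i) := by
  obtain ⟨ι, b, hb⟩ := hL
  choose σ hσ using hb
  let _ : MulAction Γ ι :=
    { smul := σ
      one_smul i := b.injective <| show b (σ 1 i) = b i by
        rw [← hσ, map_one, Module.End.one_apply]
      mul_smul g h i := b.injective <| show b (σ (g * h) i) = b (σ g (σ h i)) by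
        rw [← hσ, ← hσ, ← hσ, map_mul, Module.End.mul_apply] }
  exact ⟨ι, inferInstance, b, hσ⟩

theorem GammaLattice.IsFlasque.cocyclesAreCoboundaries_dual {F : GammaLattice Γ}
    (hF : F.IsFlasque) (H : Subgroup Γ) : CocyclesAreCoboundaries (F.ρ.dual.comp H.subtype) :=
  cocyclesAreCoboundaries_of_subsingleton_H1 _ (hF H)

variable {V : Type} [AddCommGroup V] [Module ℤ V] {ρV : Representation ℤ Γ V}

theorem cocyclesAreCoboundaries_linHom_of_isPermutation
    (hV : ∀ H : Subgroup Γ, CocyclesAreCoboundaries (ρV.dual.comp H.subtype))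
    {L : GammaLattice Γ} (hL : L.IsPermutation) : (ρV.linHom L.ρ).CocyclesAreCoboundaries := by
  obtain ⟨ι, _, b, hb⟩ := hL.exists_mulAction
  have := L.finite
  have := Module.Finite.finite_basis b
  exact cocyclesAreCoboundaries_linHom_of_permutes_basis ρV hV hb

theorem cocyclesAreCoboundaries_linHom_of_isInvertible
    (hV : ∀ H : Subgroup Γ, CocyclesAreCoboundaries (ρV.dual.comp H.subtype))
    {Q : GammaLattice Γ} (hQ : Q.IsInvertible) : (ρV.linHom Q.ρ).CocyclesAreCoboundaries := by
  obtain ⟨L, hL, i, p, hi, hp, hpi⟩ := hQ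
  exact (cocyclesAreCoboundaries_linHom_of_isPermutation hV hL).linHom_of_retract ρV
    (i.intertwiningMap_of_isIntertwiningMap Q.ρ L.ρ hi)
    (p.intertwiningMap_of_isIntertwiningMap L.ρ Q.ρ hp) (LinearMap.congr_fun hpi)

end Lattices

theorem flasque_resolution_second_type_versal_general
    {Γ : Type} [Group Γ]
    (M P F Q N : GammaLattice Γ)
    (hF : F.IsFlasque) (hQ : Q.IsInvertible)
    (i : P.carrier →ₗ[ℤ] F.carrier) (α : F.carrier →ₗ[ℤ] M.carrier)
    (hse₁ : IsShortExactSeq P.ρ F.ρ M.ρ i α)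
    (j : Q.carrier →ₗ[ℤ] N.carrier) (γmap : N.carrier →ₗ[ℤ] M.carrier)
    (hse₂ : IsShortExactSeq Q.ρ N.ρ M.ρ j γmap) :
    ∃ φ : F.carrier →ₗ[ℤ] N.carrier,
      IsEquivariantMap F.ρ N.ρ φ ∧ γmap.comp φ = α := by
  obtain ⟨-, hα, -, -, -⟩ := hse₁
  obtain ⟨hj, hγ, hj_inj, hγ_surj, hexact⟩ := hse₂
  have := F.free
  obtain ⟨φ, hφ⟩ := Representation.exists_intertwiningMap_lift
    (cocyclesAreCoboundaries_linHom_of_isInvertible hF.cocyclesAreCoboundaries_dual hQ)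
    (j.intertwiningMap_of_isIntertwiningMap _ _ hj)
    (γmap.intertwiningMap_of_isIntertwiningMap _ _ hγ) hj_inj hγ_surj
    (LinearMap.exact_iff.2 hexact.symm) (α.intertwiningMap_of_isIntertwiningMap _ _ hα)
  exact ⟨φ.toLinearMap, φ.isIntertwining, LinearMap.ext hφ⟩

/-- versality of flasque resolutions of the second type:
given `0 → P → F →[α] M → 0` with `F` flasque and `P` permutation,
and any extension `0 → Q → N →[γ] M → 0` with `Q` invertible, there is
`φ : F → N` with `γ ∘ φ = α`. -/
theorem flasque_resolution_second_type_versal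
    {Γ : Type} [Group Γ] [Finite Γ]
    (M P F Q N : GammaLattice Γ)
    (hP : P.IsPermutation) (hF : F.IsFlasque) (hQ : Q.IsInvertible)
    (i : P.carrier →ₗ[ℤ] F.carrier) (α : F.carrier →ₗ[ℤ] M.carrier)
    (hse₁ : IsShortExactSeq P.ρ F.ρ M.ρ i α)
    (j : Q.carrier →ₗ[ℤ] N.carrier) (γmap : N.carrier →ₗ[ℤ] M.carrier)
    (hse₂ : IsShortExactSeq Q.ρ N.ρ M.ρ j γmap) :
    ∃ φ : F.carrier →ₗ[ℤ] N.carrier,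
      IsEquivariantMap F.ρ N.ρ φ ∧ γmap.comp φ = α :=
  flasque_resolution_second_type_versal_general M P F Q N hF hQ i α hse₁ j γmap hse₂
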